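/- Fix a real number λ ≠ 0. For every integer n ≥ 0 and every real x, the degenerate falling factorial satisfies (x)_{n,λ} = Σ_{m=0}^{n} J_{m,λ}(x) S^{(1)}_{J,λ}(n,m). -/

import Mathlib

/-!
Write `F = e_λ(t) - 1` and `L = log_λ(1 + t)`. The generating function of the Jindalrae
polynomials is `e_λ^x ∘ (e_λ ∘ F - 1) = e_λ^x ∘ (F ∘ F)`, and `(1/k!) (L ∘ L)^k` generates
`S^{(1)}_{J,λ}(·, k)`. Since `F ∘ L = t`, substituting `L ∘ L` into the Jindalrae generating function gives back
`e_λ^x(t)`, and the identity is the comparison of the `n`-th coefficients.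

The inversion `F ∘ L = t` comes from differential equations: `(1 + λt) e_λ' = e_λ` and
`(1 + t) L' = 1 + λL`, so `A = e_λ(L)` satisfies `(1 + t) A' = A` with `A(0) = 1`,
which forces `A = 1 + t`.
-/

open Finset

/-- The degenerate falling factorial `(x)_{n,λ} = x(x−λ)⋯(x−(n−1)λ)`;
for `lam = 1` it is the ordinary falling factorial `(x)_n`. -/
noncomputable def dff (lam : ℝ) (n : ℕ) (x : ℝ) : ℝ :=
  ∏ i ∈ Finset.range n, (x - i * lam)

/-- The degenerate exponential `e_λ^x(t) = Σ_{n≥0} (x)_{n,λ} t^n/n!`. -/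
noncomputable def degExp (lam x : ℝ) : PowerSeries ℝ :=
  PowerSeries.mk fun n => dff lam n x / n.factorial

/-- The degenerate logarithm `log_λ(1+t) = Σ_{n≥1} λ^{n−1}(1)_{n,1/λ} t^n/n!`. -/
noncomputable def degLog (lam : ℝ) : PowerSeries ℝ :=
  PowerSeries.mk fun n =>
    if n = 0 then 0 else lam ^ (n - 1) * dff (1 / lam) n 1 / n.factorial

/-- Composition `f(g(t))` of formal power series (valid definition of composition
when `g` has zero constant term, as in all uses below). -/
noncomputable def pscomp (f g : PowerSeries ℝ) : PowerSeries ℝ :=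
  PowerSeries.mk fun n =>
    ∑ k ∈ Finset.range (n + 1), (PowerSeries.coeff k f) * (PowerSeries.coeff n (g ^ k))

open PowerSeries

theorem coeff_subst_eq_sum_range {R : Type*} [CommRing R] {f g : R⟦X⟧}
    (hg : constantCoeff g = 0) (n : ℕ) :
    coeff n (f.subst g) = ∑ k ∈ range (n + 1), coeff k f * coeff n (g ^ k) := by
  rw [coeff_subst' (.of_constantCoeff_zero' hg),
    finsum_eq_sum_of_support_subset (s := range (n + 1))]
  · simp only [smul_eq_mul]
  · intro k hk
    have hk : coeff n (g ^ k) ≠ 0 := right_ne_zero_of_mul (by simpa using hk)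
    simp only [coe_range, Set.mem_Iio]
    by_contra! hnk
    exact hk (X_pow_dvd_iff.mp (pow_dvd_pow_of_dvd (X_dvd_iff.mpr hg) k) n (by omega))

theorem pscomp_eq_subst {f g : ℝ⟦X⟧} (hg : constantCoeff g = 0) : pscomp f g = f.subst g := by
  ext n
  rw [pscomp, coeff_mk, coeff_subst_eq_sum_range hg]

theorem subst_sub_one {R : Type*} [CommRing R] {f g : R⟦X⟧} (hg : HasSubst g) :
    (f - 1).subst g = f.subst g - 1 := by
  rw [← coe_substAlgHom hg, map_sub, map_one]

theorem eq_one_add_X_of_one_add_X_mul_derivative {K : Type*} [Field K] [CharZero K]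
    {A : K⟦X⟧} (hA : (1 + X) * d⁄dX K A = A) (hA0 : constantCoeff A = 1) : A = 1 + X := by
  set B := A - (1 + X)
  have hB : (1 + X) * d⁄dX K B = B := by
    simp only [B, map_sub, map_add, derivative_X, Derivation.map_one_eq_zero]
    linear_combination hA
  have hrec (n : ℕ) : (n + 1) * coeff (n + 1) B = (1 - n) * coeff n B := by
    have h := congrArg (coeff n) hB
    cases n with
    | zero =>
      rw [add_mul, one_mul, map_add, coeff_zero_X_mul, coeff_derivative] at h
      push_cast at h ⊢
      linear_combination h
    | succ n =>
      rw [add_mul, one_mul, map_add, coeff_succ_X_mul, coeff_derivative, coeff_derivative] at h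
      push_cast at h ⊢
      linear_combination h
  have hB0 : ∀ n, coeff n B = 0 := by
    intro n
    induction n with
    | zero => simp [B, hA0]
    | succ n ih =>
      have h := hrec n
      rw [ih, mul_zero] at h
      exact (mul_eq_zero.mp h).resolve_left (Nat.cast_add_one_ne_zero n)
  exact sub_eq_zero.mp (ext hB0)

theorem factorial_mul_coeff_subst_egf {K : Type*} [Field K] [CharZero K]
    {a : ℕ → K} {s : ℕ → ℕ → K} {g : K⟦X⟧} (hg : constantCoeff g = 0)
    (hs : ∀ k : ℕ, C (k.factorial : K)⁻¹ * g ^ k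
      = mk fun n => if k ≤ n then s n k / n.factorial else 0) (n : ℕ) :
    n.factorial * coeff n ((mk fun m => a m / m.factorial).subst g)
      = ∑ m ∈ range (n + 1), a m * s n m := by
  rw [coeff_subst_eq_sum_range hg, mul_sum]
  refine sum_congr rfl fun m hm => ?_
  have h := congrArg (coeff n) (hs m)
  rw [coeff_C_mul, coeff_mk, if_pos (Nat.lt_succ_iff.mp (mem_range.mp hm))] at h
  rw [coeff_mk]
  have hm! : (m.factorial : K) ≠ 0 := Nat.cast_ne_zero.mpr m.factorial_ne_zero
  have hn! : (n.factorial : K) ≠ 0 := Nat.cast_ne_zero.mpr n.factorial_ne_zero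
  field_simp at h ⊢
  linear_combination (a m) * h

section Degenerate

variable (lam : ℝ)

theorem dff_succ (n : ℕ) (x : ℝ) : dff lam (n + 1) x = dff lam n x * (x - n * lam) :=
  prod_range_succ _ _

theorem coeff_degExp (x : ℝ) (n : ℕ) : coeff n (degExp lam x) = dff lam n x / n.factorial :=
  coeff_mk _ _

theorem constantCoeff_degExp (x : ℝ) : constantCoeff (degExp lam x) = 1 := by
  simp [← coeff_zero_eq_constantCoeff_apply, coeff_degExp, dff]

theorem coeff_degLog (n : ℕ) :
    coeff n (degLog lam)
      = if n = 0 then 0 else lam ^ (n - 1) * dff (1 / lam) n 1 / n.factorial :=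
  coeff_mk _ _

theorem constantCoeff_degLog : constantCoeff (degLog lam) = 0 := by
  simp [← coeff_zero_eq_constantCoeff_apply, coeff_degLog]

theorem one_add_C_mul_X_mul_derivative_degExp_one :
    (1 + C lam * X) * d⁄dX ℝ (degExp lam 1) = degExp lam 1 := by
  ext n
  rw [add_mul, one_mul, map_add, mul_assoc, coeff_C_mul]
  cases n with
  | zero => simp [coeff_derivative, coeff_degExp, dff]
  | succ n =>
    simp only [coeff_succ_X_mul, coeff_derivative, coeff_degExp, dff_succ, Nat.factorial_succ]
    push_cast
    field_simp
    ring

theorem one_add_X_mul_derivative_degLog (hlam : lam ≠ 0) :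
    (1 + X) * d⁄dX ℝ (degLog lam) = 1 + C lam * degLog lam := by
  ext n
  rw [add_mul, one_mul, map_add, map_add, coeff_C_mul]
  cases n with
  | zero => simp [coeff_derivative, coeff_degLog, dff]
  | succ n =>
    simp only [coeff_succ_X_mul, coeff_derivative, coeff_degLog, dff_succ, Nat.factorial_succ,
      coeff_one, Nat.succ_ne_zero, if_false, Nat.add_sub_cancel, pow_succ]
    push_cast
    field_simp
    ring

theorem degExp_one_subst_degLog (hlam : lam ≠ 0) :
    (degExp lam 1).subst (degLog lam) = 1 + X := by
  set L := degLog lam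
  set E := degExp lam 1
  have hL : HasSubst L := .of_constantCoeff_zero' (constantCoeff_degLog lam)
  have hsubst (f : ℝ⟦X⟧) : f.subst L = substAlgHom hL f :=
    congrFun (coe_substAlgHom (R := ℝ) hL).symm f
  have hE' : (1 + C lam * L) * (d⁄dX ℝ E).subst L = E.subst L := by
    have h := congrArg (substAlgHom hL) (one_add_C_mul_X_mul_derivative_degExp_one lam)
    rw [map_mul, map_add, map_one, map_mul, substAlgHom_X, ← hsubst, ← hsubst, ← hsubst,
      subst_C] at h
    exact h
  have hunit : 1 + C lam * L ≠ 0 := fun h => by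
    simpa [L, constantCoeff_degLog] using congrArg constantCoeff h
  refine eq_one_add_X_of_one_add_X_mul_derivative (mul_left_cancel₀ hunit ?_) ?_
  · calc (1 + C lam * L) * ((1 + X) * d⁄dX ℝ (E.subst L))
        = ((1 + C lam * L) * (d⁄dX ℝ E).subst L) * ((1 + X) * d⁄dX ℝ L) := by
          rw [derivative_subst hL]; ring
      _ = (1 + C lam * L) * E.subst L := by
          rw [hE', one_add_X_mul_derivative_degLog lam hlam, mul_comm]
  · rw [← coeff_zero_eq_constantCoeff_apply, coeff_subst_eq_sum_range (constantCoeff_degLog lam)]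
    simp [E, coeff_degExp, dff]

end Degenerate

theorem degenerate_falling_via_jindalrae_jindalrae1 (lam : ℝ) (hlam : lam ≠ 0)
    (SJ1 : ℕ → ℕ → ℝ) (J : ℕ → ℝ → ℝ)
    (hSJ1 : ∀ k : ℕ, (PowerSeries.C ((k.factorial : ℝ))⁻¹) * (pscomp (degLog lam) (degLog lam)) ^ k = PowerSeries.mk (fun n => if k ≤ n then SJ1 n k / n.factorial else 0))
    (hJ : ∀ x : ℝ, pscomp (degExp lam x) (pscomp (degExp lam 1) (degExp lam 1 - 1) - 1) = PowerSeries.mk (fun n => J n x / n.factorial))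
    : ∀ (n : ℕ) (x : ℝ), dff lam n x = ∑ m ∈ Finset.range (n + 1), J m x * SJ1 n m := by
  intro n x
  set L := degLog lam
  set F := degExp lam 1 - 1
  have hL0 : constantCoeff L = 0 := constantCoeff_degLog lam
  have hF0 : constantCoeff F = 0 := by simp [F, constantCoeff_degExp]
  have hLL0 : constantCoeff (L.subst L) = 0 := constantCoeff_subst_eq_zero hL0 _ hL0
  have hFF0 : constantCoeff (F.subst F) = 0 := constantCoeff_subst_eq_zero hF0 _ hF0
  have hL : HasSubst L := .of_constantCoeff_zero' hL0
  have hF : HasSubst F := .of_constantCoeff_zero' hF0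
  have hLL : HasSubst (L.subst L : ℝ⟦X⟧) := .of_constantCoeff_zero' hLL0
  have hFL : F.subst L = X := by
    rw [subst_sub_one hL, degExp_one_subst_degLog lam hlam, add_sub_cancel_left]
  have hFFLL : subst (L.subst L : ℝ⟦X⟧) (F.subst F : ℝ⟦X⟧) = X := by
    rw [subst_comp_subst_apply hF hLL, ← subst_comp_subst_apply hL hL, hFL, subst_X hL, hFL]
  have hJgen : (mk fun m => J m x / m.factorial).subst (L.subst L) = degExp lam x := by
    rw [← hJ x, pscomp_eq_subst hF0, ← subst_sub_one hF, pscomp_eq_subst hFF0,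
      subst_comp_subst_apply (.of_constantCoeff_zero' hFF0) hLL, hFFLL, X_subst]
  have h := factorial_mul_coeff_subst_egf (a := fun m => J m x) hLL0
    (fun k => pscomp_eq_subst hL0 ▸ hSJ1 k) n
  rwa [hJgen, coeff_degExp, mul_div_cancel₀ _ (Nat.cast_ne_zero.mpr n.factorial_ne_zero)] at h
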